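/- arXiv:2503.17598 — 2 statements merged into one kernel-verified Lean document; each statement's English description precedes it below -/
import Mathlib

section
/- Mixed-strategy Nash equilibria of the base game are not necessarily preserved under coarse-graining: there exist a two-player finite normal-form game with payoffs u, a coarse-grained partition 𝔊 of ℝ with a coarse map f for 𝔊, and a mixed-strategy profile σ such that σ is a mixed Nash equilibrium of the base game with payoffs u but σ is not a mixed Nash equilibrium of the transformed game with payoffs i ↦ f ∘ (u i). -/
/-- A coarse-grained partition of ℝ: a family of pairwise disjoint, nonempty,
order-connected subsets of ℝ whose union is all of ℝ. -/
structure IsCGPartition (𝔊 : Set (Set ℝ)) : Prop where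
  nonempty : ∀ G ∈ 𝔊, G.Nonempty
  ordConnected : ∀ G ∈ 𝔊, G.OrdConnected
  pairwiseDisjoint : ∀ G ∈ 𝔊, ∀ G' ∈ 𝔊, G ≠ G' → Disjoint G G'
  covers : ⋃₀ 𝔊 = Set.univ

/-- A coarse map for a coarse-grained partition `𝔊`: `f x` lies in the block
containing `x`, and `f` is constant on each block. -/
structure IsCoarseMap (𝔊 : Set (Set ℝ)) (f : ℝ → ℝ) : Prop where
  mem_block : ∀ x : ℝ, ∀ G ∈ 𝔊, x ∈ G → f x ∈ G
  const_on_block : ∀ x y : ℝ, ∀ G ∈ 𝔊, x ∈ G → y ∈ G → f x = f y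

/-- A mixed strategy on a finite strategy type: nonnegative weights summing to 1. -/
def IsMixedStrategy {A : Type*} [Fintype A] (σ : A → ℝ) : Prop :=
  (∀ a : A, 0 ≤ σ a) ∧ ∑ a : A, σ a = 1

/-- Expected payoff of player `i` under the mixed-strategy profile `σ`. -/
def expectedPayoff {ι : Type*} [Fintype ι] [DecidableEq ι]
    {S : ι → Type*} [∀ i, Fintype (S i)]
    (u : ι → (∀ i, S i) → ℝ) (σ : ∀ i, S i → ℝ) (i : ι) : ℝ :=
  ∑ s : ∀ j, S j, (∏ j : ι, σ j (s j)) * u i s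

/-- A mixed-strategy profile `σ` is a mixed Nash equilibrium if every component
is a mixed strategy and no player can improve their expected payoff by
unilaterally switching to another mixed strategy. -/
def IsMixedNash {ι : Type*} [Fintype ι] [DecidableEq ι]
    {S : ι → Type*} [∀ i, Fintype (S i)]
    (u : ι → (∀ i, S i) → ℝ) (σ : ∀ i, S i → ℝ) : Prop :=
  (∀ i : ι, IsMixedStrategy (σ i)) ∧
  ∀ i : ι, ∀ τ : S i → ℝ, IsMixedStrategy τ →
    expectedPayoff u (Function.update σ i τ) i ≤ expectedPayoff u σ i

/-!
Let the column player mix evenly. The row player then gets `1` or `-1` in row `0` and `0` in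
row `1`, so she is indifferent, and playing row `0` against the even mix is an equilibrium.
The coarse map that sends the negative half-line to `-1` and the nonnegative half-line to `0`
erases the gain `1` but keeps the loss `-1`: row `0` now earns `-1/2` and she switches to row `1`.
-/

lemma isMixedStrategy_fin_two_iff (σ : Fin 2 → ℝ) :
    IsMixedStrategy σ ↔ 0 ≤ σ 0 ∧ 0 ≤ σ 1 ∧ σ 0 + σ 1 = 1 := by
  simp [IsMixedStrategy, Fin.forall_fin_two, Fin.sum_univ_two, and_assoc]

lemma expectedPayoff_fin_two (u : Fin 2 → (Fin 2 → Fin 2) → ℝ) (σ : Fin 2 → Fin 2 → ℝ)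
    (i : Fin 2) :
    expectedPayoff u σ i =
      σ 0 0 * σ 1 0 * u i ![0, 0] + σ 0 0 * σ 1 1 * u i ![0, 1] +
      σ 0 1 * σ 1 0 * u i ![1, 0] + σ 0 1 * σ 1 1 * u i ![1, 1] := by
  rw [expectedPayoff, ← (piFinTwoEquiv fun _ => Fin 2).symm.sum_comp]
  simp only [piFinTwoEquiv, Fin.isValue, Matrix.finZeroElim_eq_zero, Matrix.zero_empty,
    Matrix.Fin.cons_vecEmpty, Matrix.Fin.cons_vecCons, Nat.succ_eq_add_one, Nat.reduceAdd,
    Equiv.symm_mk, Equiv.coe_fn_mk, Fin.prod_univ_two, Matrix.cons_val_zero, Matrix.cons_val_one,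
    Matrix.cons_val_fin_one, Fintype.sum_prod_type, Fin.sum_univ_two]
  ring

lemma isCGPartition_Iio_Ici (c : ℝ) : IsCGPartition {Set.Iio c, Set.Ici c} where
  nonempty := by
    rintro G (rfl | rfl)
    · exact Set.nonempty_Iio
    · exact Set.nonempty_Ici
  ordConnected := by
    rintro G (rfl | rfl)
    · exact Set.ordConnected_Iio
    · exact Set.ordConnected_Ici
  pairwiseDisjoint := by
    rintro G (rfl | rfl) G' (rfl | rfl) hne
    · exact absurd rfl hne
    · exact Set.Iio_disjoint_Ici le_rfl
    · exact (Set.Iio_disjoint_Ici le_rfl).symm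
    · exact absurd rfl hne
  covers := by rw [Set.sUnion_pair, Set.Iio_union_Ici]

lemma isCoarseMap_Iio_Ici {a b c : ℝ} (ha : a < c) (hb : c ≤ b) :
    IsCoarseMap {Set.Iio c, Set.Ici c} (fun x => if x < c then a else b) where
  mem_block := by
    rintro x G (rfl | rfl) hx
    · simpa [Set.mem_Iio.1 hx] using ha
    · simpa [not_lt.2 (Set.mem_Ici.1 hx)] using hb
  const_on_block := by
    rintro x y G (rfl | rfl) hx hy
    · simp [Set.mem_Iio.1 hx, Set.mem_Iio.1 hy]
    · simp [not_lt.2 (Set.mem_Ici.1 hx), not_lt.2 (Set.mem_Ici.1 hy)]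

def indifferenceGame (i : Fin 2) (s : Fin 2 → Fin 2) : ℝ :=
  if i = 0 then ![![1, -1], ![0, 0]] (s 0) (s 1) else 0

noncomputable def roundAtZero (x : ℝ) : ℝ :=
  if x < 0 then -1 else 0

noncomputable def rowZeroEvenMix : Fin 2 → Fin 2 → ℝ :=
  ![![1, 0], ![1 / 2, 1 / 2]]

lemma isMixedNash_rowZeroEvenMix : IsMixedNash indifferenceGame rowZeroEvenMix := by
  refine ⟨fun i => ?_, fun i τ _ => ?_⟩ <;> fin_cases i
  all_goals
    norm_num [isMixedStrategy_fin_two_iff, expectedPayoff_fin_two, indifferenceGame,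
      rowZeroEvenMix, Function.update]

lemma not_isMixedNash_rowZeroEvenMix_roundAtZero :
    ¬ IsMixedNash (fun i => roundAtZero ∘ indifferenceGame i) rowZeroEvenMix := by
  rintro ⟨-, hNash⟩
  have hRowOne := hNash 0 ![0, 1] ((isMixedStrategy_fin_two_iff _).2 (by norm_num))
  norm_num [expectedPayoff_fin_two, indifferenceGame, roundAtZero, rowZeroEvenMix,
    Function.update] at hRowOne

/-- mixed-strategy Nash equilibria of the base game are not
necessarily preserved under coarse-graining: there is a two-player finite
normal-form game, a coarse-grained partition with a coarse map `f`, and a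
mixed profile `σ` that is a mixed Nash equilibrium of the base game but not of
the transformed game with payoffs `i ↦ f ∘ u i`. -/
theorem mixedNash_not_preserved :
    ∃ (S : Fin 2 → Type) (instS : ∀ i, Fintype (S i)) (_ : ∀ i, Nonempty (S i))
      (u : Fin 2 → (∀ i, S i) → ℝ) (𝔊 : Set (Set ℝ)) (f : ℝ → ℝ)
      (σ : ∀ i, S i → ℝ),
      IsCGPartition 𝔊 ∧ IsCoarseMap 𝔊 f ∧
      (@IsMixedNash (Fin 2) _ _ S instS u σ) ∧
      ¬ (@IsMixedNash (Fin 2) _ _ S instS (fun i => f ∘ u i) σ) :=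
  ⟨fun _ => Fin 2, inferInstance, fun _ => inferInstance, indifferenceGame, _, roundAtZero,
    rowZeroEvenMix, isCGPartition_Iio_Ici 0, isCoarseMap_Iio_Ici (by norm_num) le_rfl,
    isMixedNash_rowZeroEvenMix, not_isMixedNash_rowZeroEvenMix_roundAtZero⟩
end

section
/- (Failure of Cooperation) There exist a coarse-grained partition 𝔊 of ℝ, a coarse map f for 𝔊, real numbers T_B < T_C < T_D with f T_B < f T_C < f T_D, and a discount factor δ with 0 < δ < 1, such that (T_D − T_C)/(T_D − T_B) ≤ δ < (f T_D − f T_C)/(f T_D − f T_B). Consequently, cooperation via the trigger strategy is sustainable with respect to the base payoffs but not with respect to the coarse-grained payoffs: ∑'_{t : ℕ} δ^t · T_C ≥ T_D + ∑'_{t : ℕ} δ^(t+1) · T_B, while ∑'_{t : ℕ} δ^t · (f T_C) < f T_D + ∑'_{t : ℕ} δ^(t+1) · (f T_B). -/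
/-- Failure of Cooperation: there are a coarse-grained partition,
a coarse map `f`, trigger-strategy stage payoffs `T_B < T_C < T_D` with
`f T_B < f T_C < f T_D`, and a discount factor `δ ∈ (0,1)` lying between the
base-game critical threshold and the coarse-grained one; consequently
cooperation is sustainable with respect to the base payoffs but not with
respect to the coarse-grained payoffs. -/
theorem failure_of_cooperation :
    ∃ (𝔊 : Set (Set ℝ)) (f : ℝ → ℝ) (T_B T_C T_D δ : ℝ),
      IsCGPartition 𝔊 ∧ IsCoarseMap 𝔊 f ∧
      T_B < T_C ∧ T_C < T_D ∧ f T_B < f T_C ∧ f T_C < f T_D ∧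
      0 < δ ∧ δ < 1 ∧
      (T_D - T_C) / (T_D - T_B) ≤ δ ∧
      δ < (f T_D - f T_C) / (f T_D - f T_B) ∧
      (T_D + ∑' t : ℕ, δ ^ (t + 1) * T_B ≤ ∑' t : ℕ, δ ^ t * T_C) ∧
      (∑' t : ℕ, δ ^ t * f T_C < f T_D + ∑' t : ℕ, δ ^ (t + 1) * f T_B) := by
  refine ⟨{Set.Iio 1, Set.Ico 1 2, Set.Ici 2},
    fun x => if x < 1 then 0 else if x < 2 then 1 else 2,
    0, 19/10, 2, 1/10, ?_, ?_, ?_, ?_, ?_, ?_, ?_, ?_, ?_, ?_, ?_, ?_⟩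
  · constructor
    · rintro G (rfl | rfl | rfl)
      · exact ⟨0, by norm_num⟩
      · exact ⟨1, by norm_num⟩
      · exact ⟨2, by norm_num⟩
    · rintro G (rfl | rfl | rfl)
      · exact Set.ordConnected_Iio
      · exact Set.ordConnected_Ico
      · exact Set.ordConnected_Ici
    · rintro G (rfl | rfl | rfl) G' (rfl | rfl | rfl) h <;>
        first
        | exact absurd rfl h
        | · rw [Set.disjoint_iff_inter_eq_empty]
            ext x
            simp only [Set.mem_inter_iff, Set.mem_Iio, Set.mem_Ico, Set.mem_Ici,
              Set.mem_empty_iff_false, iff_false]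
            intro hx
            linarith [hx.1, hx.2]
    · ext x
      simp only [Set.mem_sUnion, Set.mem_univ, iff_true]
      by_cases h1 : x < 1
      · exact ⟨Set.Iio 1, by simp, h1⟩
      · by_cases h2 : x < 2
        · exact ⟨Set.Ico 1 2, by simp, ⟨le_of_not_gt h1, h2⟩⟩
        · exact ⟨Set.Ici 2, by simp, le_of_not_gt h2⟩
  · constructor
    · rintro x G (rfl | rfl | rfl) hx
      · simp only [Set.mem_Iio] at hx
        simp [hx]
      · obtain ⟨h1, h2⟩ := hx
        simp only [Set.mem_Ico]
        rw [if_neg (not_lt.2 h1), if_pos h2]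
        norm_num
      · simp only [Set.mem_Ici] at hx
        rw [if_neg (by linarith), if_neg (by linarith)]
        exact Set.mem_Ici.2 le_rfl
    · rintro x y G (rfl | rfl | rfl) hx hy
      · simp only [Set.mem_Iio] at hx hy
        simp [hx, hy]
      · obtain ⟨hx1, hx2⟩ := hx; obtain ⟨hy1, hy2⟩ := hy
        rw [if_neg (not_lt.2 hx1), if_pos hx2, if_neg (not_lt.2 hy1), if_pos hy2]
      · simp only [Set.mem_Ici] at hx hy
        rw [if_neg (by linarith), if_neg (by linarith),
          if_neg (by linarith), if_neg (by linarith)]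
  · norm_num
  · norm_num
  · norm_num
  · norm_num
  · norm_num
  · norm_num
  · norm_num
  · norm_num
  · have h1 : ∑' t : ℕ, (1/10 : ℝ) ^ (t + 1) * 0 = 0 := by simp
    have h2 : ∑' t : ℕ, (1/10 : ℝ) ^ t * (19/10) = (10/9) * (19/10) := by
      rw [tsum_mul_right, tsum_geometric_of_lt_one (by norm_num) (by norm_num)]
      norm_num
    rw [h1, h2]; norm_num
  · simp only
    have h1 : ∑' t : ℕ, (1/10 : ℝ) ^ (t + 1) * 0 = 0 := by simp
    have h2 : ∑' t : ℕ, (1/10 : ℝ) ^ t = 10/9 := by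
      rw [tsum_geometric_of_lt_one (by norm_num) (by norm_num)]
      norm_num
    norm_num [h1, h2]
end
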